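/- Let a > 0. There is a constant c8 = c8(a) > 0 such that for all cycle configurations ω = (X,X̄,σ,T), ω' = (X',X̄',σ',T') with (T,T') ≠ (A,B) and all Z, Γ ∈ ℝ, the map γ ↦ H_middle,a,0(ω | Z, Γ + γ·1_{σ≠σ'} | ω') is twice differentiable on [−1,1], and for j = 1, 2 one has sup_{γ∈[−1,1]} |(∂^j/∂γ^j) H_middle,a,0(ω | Z, Γ + γ·1_{σ≠σ'} | ω')| ≤ c8 + H_expII(ω|Z,Γ|ω'). -/

import Mathlib

open MeasureTheory Real

/-- Tree labels A, B, C, D encoded as `Fin 4`. -/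
abbrev TreeLabel := Fin 4

def lA : TreeLabel := 0
def lB : TreeLabel := 1
def lC : TreeLabel := 2
def lD : TreeLabel := 3

/-- A cycle configuration `(X, X̄, σ, T)`; the sign `σ` is encoded as a `Bool`. -/
abbrev CycleConfig := ℝ × ℝ × Bool × TreeLabel

/-- The numerical value of a sign. -/
noncomputable def sgnv (b : Bool) : ℝ := if b then 1 else -1

/-- Real-valued indicator of a proposition. -/
noncomputable def indR (p : Prop) [Decidable p] : ℝ := if p then 1 else 0

/-- `U = (X + X̄)/2`. -/
noncomputable def Uof (ω : CycleConfig) : ℝ := (ω.1 + ω.2.1) / 2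

/-- `W = Γ + U' − U`. -/
noncomputable def Wof (ω : CycleConfig) (Γ : ℝ) (ω' : CycleConfig) : ℝ :=
  Γ + Uof ω' - Uof ω

noncomputable def Hln (a : ℝ) (ω : CycleConfig) (Z Γ : ℝ) (ω' : CycleConfig) : ℝ :=
  ((3 * a + 1) / 2) *
    (Real.log (exp (ω.1 + Wof ω Γ ω' / 2) + exp (ω'.1 - Wof ω Γ ω' / 2) + exp Z)
      + Real.log (exp (ω.2.1 + Wof ω Γ ω' / 2) + exp (ω'.2.1 - Wof ω Γ ω' / 2) + exp Z))

noncomputable def Hlinear (a : ℝ) (ω : CycleConfig) (Z : ℝ) (ω' : CycleConfig) : ℝ :=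
  -(a + 1 / 2) * (Uof ω + Uof ω' + Z)

noncomputable def Htree (ω : CycleConfig) (Z Γ : ℝ) (ω' : CycleConfig) : ℝ :=
  (1 / 2) * (indR (ω.2.2.2 = lC) * ω.1 + indR (ω.2.2.2 = lD) * ω.2.1
      + indR (ω'.2.2.2 = lC) * ω'.1 + indR (ω'.2.2.2 = lD) * ω'.2.1)
    + (indR (ω'.2.2.2 = lB) + indR (ω.2.2.2 = lA)) * Z
    + (1 / 2) * (indR (ω'.2.2.2 = lB) - indR (ω.2.2.2 = lA)) * Wof ω Γ ω'
    - (1 / 2) * (indR (ω.2.2.2 = lA) - indR (ω.2.2.2 = lB)) * Uof ω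
    + (1 / 2) * (indR (ω'.2.2.2 = lA) - indR (ω'.2.2.2 = lB)) * Uof ω'

noncomputable def HexpI (ω : CycleConfig) (ω' : CycleConfig) : ℝ :=
  (1 / 4) * (exp (-ω.1) + exp (-ω.2.1) + exp (-ω'.1) + exp (-ω'.2.1))

noncomputable def HexpII (ω : CycleConfig) (Z Γ : ℝ) (ω' : CycleConfig) : ℝ :=
  (1 / 2) * (sgnv ω.2.2.1 * exp (Wof ω Γ ω' / 4) - sgnv ω'.2.2.1 * exp (-Wof ω Γ ω' / 4)) ^ 2
    * exp (-Z)

/-- The (finite part of the) middle Hamiltonian `H_middle,a,η`. -/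
noncomputable def Hmid (a η : ℝ) (ω : CycleConfig) (Z Γ : ℝ) (ω' : CycleConfig) : ℝ :=
  Hln a ω Z Γ ω' + Hlinear a ω Z ω' + Htree ω Z Γ ω' + HexpI ω ω' + HexpII ω Z Γ ω' - η * Γ

/-- The left boundary Hamiltonian `H_left,a(Z|ω)`. -/
noncomputable def Hleft (a : ℝ) (Z : ℝ) (ω : CycleConfig) : ℝ :=
  a * Real.log (exp ω.2.1 + exp Z)
    + (a + 1 / 2) * (Real.log (exp ω.1 + exp Z) - Uof ω - Z)
    + (1 / 2) * (indR (ω.2.2.2 = lC) * ω.1 + indR (ω.2.2.2 = lD) * ω.2.1)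
    + indR (ω.2.2.2 = lB) * Z
    + (1 / 2) * (indR (ω.2.2.2 = lA) - indR (ω.2.2.2 = lB)) * Uof ω
    + (1 / 4) * (exp (-ω.1) + exp (-ω.2.1)) + (1 / 2) * exp (-Z)
    + Uof ω / 4

/-- The right boundary Hamiltonian `H_right,a(ω|Z)`. -/
noncomputable def Hright (a : ℝ) (ω : CycleConfig) (Z : ℝ) : ℝ :=
  (a + 1 / 2) * (Real.log (exp ω.1 + exp Z) + Real.log (exp ω.2.1 + exp Z) - Uof ω - Z)
    + (1 / 2) * (indR (ω.2.2.2 = lC) * ω.1 + indR (ω.2.2.2 = lD) * ω.2.1)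
    + indR (ω.2.2.2 = lA) * Z
    - (1 / 2) * (indR (ω.2.2.2 = lA) - indR (ω.2.2.2 = lB)) * Uof ω
    + (1 / 4) * (exp (-ω.1) + exp (-ω.2.1)) + (1 / 2) * exp (-Z)
    - Uof ω / 4

/-!
Only `H_ln`, `H_tree` and `H_expII` depend on `Γ`, and only through `W`, which moves by `γ`.
Each logarithm `t ↦ log (e^{p + t/2} + e^{q - t/2} + r)` has first and second derivatives
bounded by `1/2` and `1/4`, and `H_tree` is affine in `W`. When `σ ≠ σ'` one has
`H_expII = (cosh (W/2) + 1) e^{-Z}`, whose derivatives `sinh (W/2) e^{-Z} / 2` and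
`cosh (W/2) e^{-Z} / 4` are controlled by `H_expII` itself, since moving `W` by at most `1`
changes `cosh (W/2)` by a factor at most `e^{1/2} ≤ 2`. When `σ = σ'` the map is constant.
-/

namespace MiddleHamiltonian

noncomputable section

section LogTilt

variable (p q r : ℝ)

def logTilt (t : ℝ) : ℝ := Real.log (exp (p + t / 2) + exp (q - t / 2) + r)

def logTiltDeriv (t : ℝ) : ℝ :=
  (exp (p + t / 2) - exp (q - t / 2)) / (2 * (exp (p + t / 2) + exp (q - t / 2) + r))

def logTiltDeriv2 (t : ℝ) : ℝ :=
  ((exp (p + t / 2) + exp (q - t / 2)) * (exp (p + t / 2) + exp (q - t / 2) + r)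
      - (exp (p + t / 2) - exp (q - t / 2)) ^ 2) /
    (4 * (exp (p + t / 2) + exp (q - t / 2) + r) ^ 2)

variable {r}

theorem hasDerivAt_exp_add_half (t : ℝ) :
    HasDerivAt (fun t => exp (p + t / 2)) (exp (p + t / 2) / 2) t := by
  simpa [div_eq_mul_inv, mul_comm] using (((hasDerivAt_id t).div_const 2).const_add p).exp

theorem hasDerivAt_exp_sub_half (t : ℝ) :
    HasDerivAt (fun t => exp (q - t / 2)) (-(exp (q - t / 2) / 2)) t := by
  simpa [div_eq_mul_inv, mul_comm] using (((hasDerivAt_id t).div_const 2).const_sub q).exp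

theorem hasDerivAt_logTilt (hr : 0 ≤ r) (t : ℝ) :
    HasDerivAt (logTilt p q r) (logTiltDeriv p q r t) t := by
  have hS : HasDerivAt (fun t => exp (p + t / 2) + exp (q - t / 2) + r)
      (exp (p + t / 2) / 2 + -(exp (q - t / 2) / 2)) t :=
    ((hasDerivAt_exp_add_half p t).add (hasDerivAt_exp_sub_half q t)).add_const r
  refine (hS.log (by positivity)).congr_deriv ?_
  unfold logTiltDeriv
  field_simp
  ring

theorem hasDerivAt_logTiltDeriv (hr : 0 ≤ r) (t : ℝ) :
    HasDerivAt (logTiltDeriv p q r) (logTiltDeriv2 p q r t) t := by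
  have hA := hasDerivAt_exp_add_half p t
  have hB := hasDerivAt_exp_sub_half q t
  have hS : HasDerivAt (fun t => 2 * (exp (p + t / 2) + exp (q - t / 2) + r))
      (2 * (exp (p + t / 2) / 2 + -(exp (q - t / 2) / 2))) t :=
    ((hA.add hB).add_const r).const_mul 2
  have hN : HasDerivAt (fun t => exp (p + t / 2) - exp (q - t / 2))
      (exp (p + t / 2) / 2 - -(exp (q - t / 2) / 2)) t := hA.sub hB
  refine (hN.div hS (by positivity)).congr_deriv ?_
  unfold logTiltDeriv2
  field_simp
  ring

theorem abs_logTiltDeriv_le (hr : 0 ≤ r) (t : ℝ) : |logTiltDeriv p q r t| ≤ 1 / 2 := by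
  have hA := exp_pos (p + t / 2)
  have hB := exp_pos (q - t / 2)
  have hS : 0 < 2 * (exp (p + t / 2) + exp (q - t / 2) + r) := by positivity
  rw [logTiltDeriv, abs_div, abs_of_pos hS, div_le_iff₀ hS, abs_le]
  constructor <;> linarith

theorem abs_logTiltDeriv2_le (hr : 0 ≤ r) (t : ℝ) : |logTiltDeriv2 p q r t| ≤ 1 / 4 := by
  set A := exp (p + t / 2)
  set B := exp (q - t / 2)
  have hA : 0 < A := exp_pos _
  have hB : 0 < B := exp_pos _
  have hS : 0 < 4 * (A + B + r) ^ 2 := by positivity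
  rw [logTiltDeriv2, abs_div, abs_of_pos hS, div_le_iff₀ hS, abs_le]
  -- `(A + B) S ≤ S²` and `(A - B)² ≤ S²` with `S = A + B + r`
  constructor <;> nlinarith [sq_nonneg (A - B), mul_pos hA hB, mul_nonneg (add_pos hA hB).le hr]

end LogTilt

theorem cosh_add_le_exp_abs_mul_cosh (x y : ℝ) : cosh (x + y) ≤ exp |y| * cosh x := by
  have hy : exp y ≤ exp |y| := exp_le_exp.mpr (le_abs_self y)
  have hy' : exp (-y) ≤ exp |y| := exp_le_exp.mpr (neg_le_abs y)
  rw [cosh_eq, cosh_eq, neg_add, exp_add, exp_add]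
  nlinarith [exp_pos x, exp_pos (-x)]

theorem exp_half_le_two : exp (1 / 2 : ℝ) ≤ 2 := by
  have h : exp (1 / 2 : ℝ) ^ 2 = exp 1 := by rw [← exp_nat_mul]; norm_num
  nlinarith [exp_one_lt_three, exp_pos (1 / 2 : ℝ)]

theorem cosh_half_add_le (x : ℝ) {y : ℝ} (hy : |y| ≤ 1) :
    cosh ((x + y) / 2) ≤ 2 * cosh (x / 2) := by
  calc cosh ((x + y) / 2) = cosh (x / 2 + y / 2) := by ring_nf
    _ ≤ exp |y / 2| * cosh (x / 2) := cosh_add_le_exp_abs_mul_cosh _ _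
    _ ≤ 2 * cosh (x / 2) := by
      gcongr
      refine (exp_le_exp.mpr ?_).trans exp_half_le_two
      rw [abs_div, abs_two]
      linarith

theorem half_sq_sub_exp_eq {s s' : ℝ} (hs : s ^ 2 = 1) (hs' : s' ^ 2 = 1) (x : ℝ) :
    (1 / 2) * (s * exp x - s' * exp (-x)) ^ 2 = cosh (2 * x) - s * s' := by
  have h1 : exp (2 * x) = exp x ^ 2 := by rw [← exp_nat_mul]; norm_num
  have h2 : exp (-(2 * x)) = exp (-x) ^ 2 := by rw [← exp_nat_mul]; ring_nf
  have h3 : exp x * exp (-x) = 1 := by rw [← exp_add, add_neg_cancel, exp_zero]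
  rw [cosh_eq, h1, h2]
  linear_combination (exp x ^ 2 / 2) * hs + (exp (-x) ^ 2 / 2) * hs' - s * s' * h3

theorem sgnv_sq (b : Bool) : sgnv b ^ 2 = 1 := by
  cases b <;> norm_num [sgnv]

theorem sgnv_mul_sgnv_of_ne {b b' : Bool} (h : b ≠ b') : sgnv b * sgnv b' = -1 := by
  cases b <;> cases b' <;> simp_all [sgnv]

section Configuration

variable (a η : ℝ) (ω : CycleConfig) (Z Γ : ℝ) (ω' : CycleConfig)

def treeSlope : ℝ := (1 / 2) * (indR (ω'.2.2.2 = lB) - indR (ω.2.2.2 = lA))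

def dHmid : ℝ :=
  (3 * a + 1) / 2 * (logTiltDeriv ω.1 ω'.1 (exp Z) (Wof ω Γ ω')
      + logTiltDeriv ω.2.1 ω'.2.1 (exp Z) (Wof ω Γ ω'))
    + treeSlope ω ω' + sinh (Wof ω Γ ω' / 2) / 2 * exp (-Z) - η

def d2Hmid : ℝ :=
  (3 * a + 1) / 2 * (logTiltDeriv2 ω.1 ω'.1 (exp Z) (Wof ω Γ ω')
      + logTiltDeriv2 ω.2.1 ω'.2.1 (exp Z) (Wof ω Γ ω'))
    + cosh (Wof ω Γ ω' / 2) / 4 * exp (-Z)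

theorem Wof_add (γ : ℝ) : Wof ω (Γ + γ) ω' = Wof ω Γ ω' + γ := by
  unfold Wof; ring

theorem hasDerivAt_Wof : HasDerivAt (fun Γ => Wof ω Γ ω') 1 Γ :=
  ((hasDerivAt_id Γ).add_const _).sub_const _

theorem abs_treeSlope_le : |treeSlope ω ω'| ≤ 1 / 2 := by
  unfold treeSlope indR
  split_ifs <;> norm_num

theorem Htree_eq : Htree ω Z Γ ω' = Htree ω Z 0 ω' + treeSlope ω ω' * Γ := by
  unfold Htree treeSlope Wof; ring

theorem HexpII_eq :
    HexpII ω Z Γ ω' = (cosh (Wof ω Γ ω' / 2) - sgnv ω.2.2.1 * sgnv ω'.2.2.1) * exp (-Z) := by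
  rw [HexpII, neg_div, half_sq_sub_exp_eq (sgnv_sq _) (sgnv_sq _)]
  ring_nf

theorem HexpII_nonneg : 0 ≤ HexpII ω Z Γ ω' := by
  unfold HexpII; positivity

theorem hasDerivAt_Hmid : HasDerivAt (fun Γ => Hmid a η ω Z Γ ω') (dHmid a η ω Z Γ ω') Γ := by
  have hW := hasDerivAt_Wof ω Γ ω'
  have hln : HasDerivAt (fun Γ => Hln a ω Z Γ ω') ((3 * a + 1) / 2 *
      (logTiltDeriv ω.1 ω'.1 (exp Z) (Wof ω Γ ω') * 1
        + logTiltDeriv ω.2.1 ω'.2.1 (exp Z) (Wof ω Γ ω') * 1)) Γ :=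
    ((((hasDerivAt_logTilt _ _ (exp_pos Z).le _).comp Γ hW).add
      ((hasDerivAt_logTilt _ _ (exp_pos Z).le _).comp Γ hW)).const_mul _)
  have htree : HasDerivAt (fun Γ => Htree ω Z Γ ω') (treeSlope ω ω' * 1) Γ := by
    rw [funext (Htree_eq ω Z · ω')]
    exact ((hasDerivAt_id Γ).const_mul _).const_add _
  have hexp : HasDerivAt (fun Γ => HexpII ω Z Γ ω')
      (sinh (Wof ω Γ ω' / 2) * (1 / 2) * exp (-Z)) Γ := by
    simp only [HexpII_eq ω Z _ ω']
    exact (((hW.div_const 2).cosh).sub_const _).mul_const _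
  refine (((((hln.add_const (Hlinear a ω Z ω')).add htree).add_const (HexpI ω ω')).add
    hexp).sub ((hasDerivAt_id Γ).const_mul η)).congr_deriv ?_
  unfold dHmid
  ring

theorem hasDerivAt_dHmid :
    HasDerivAt (fun Γ => dHmid a η ω Z Γ ω') (d2Hmid a ω Z Γ ω') Γ := by
  have hW := hasDerivAt_Wof ω Γ ω'
  have hln := (((hasDerivAt_logTiltDeriv ω.1 ω'.1 (exp_pos Z).le _).comp Γ hW).add
      ((hasDerivAt_logTiltDeriv ω.2.1 ω'.2.1 (exp_pos Z).le _).comp Γ hW)).const_mul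
    ((3 * a + 1) / 2)
  have hexp := (((hW.div_const 2).sinh).div_const 2).mul_const (exp (-Z))
  refine (((hln.add_const (treeSlope ω ω')).add hexp).sub_const η).congr_deriv ?_
  unfold d2Hmid
  ring

variable {ω ω'}

theorem HexpII_eq_of_ne (hσ : ω.2.2.1 ≠ ω'.2.2.1) :
    HexpII ω Z Γ ω' = (cosh (Wof ω Γ ω' / 2) + 1) * exp (-Z) := by
  rw [HexpII_eq, sgnv_mul_sgnv_of_ne hσ, sub_neg_eq_add]

theorem abs_dHmid_le (hσ : ω.2.2.1 ≠ ω'.2.2.1) {γ : ℝ} (hγ : |γ| ≤ 1) :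
    |dHmid a 0 ω Z (Γ + γ) ω'| ≤ |(3 * a + 1) / 2| + 1 + HexpII ω Z Γ ω' := by
  have hZ := exp_pos (-Z)
  have hlog : |logTiltDeriv ω.1 ω'.1 (exp Z) (Wof ω Γ ω' + γ)
      + logTiltDeriv ω.2.1 ω'.2.1 (exp Z) (Wof ω Γ ω' + γ)| ≤ 1 := by
    have h := abs_logTiltDeriv_le ω.1 ω'.1 (exp_pos Z).le (Wof ω Γ ω' + γ)
    have h' := abs_logTiltDeriv_le ω.2.1 ω'.2.1 (exp_pos Z).le (Wof ω Γ ω' + γ)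
    exact (abs_add_le _ _).trans (by linarith)
  have hsinh : |sinh ((Wof ω Γ ω' + γ) / 2)| ≤ 2 * cosh (Wof ω Γ ω' / 2) := by
    rw [abs_sinh]
    exact (sinh_lt_cosh _).le.trans ((cosh_abs _).trans_le (cosh_half_add_le _ hγ))
  rw [dHmid, Wof_add, HexpII_eq_of_ne Z Γ hσ, sub_zero]
  calc _ ≤ |(3 * a + 1) / 2| * 1 + 1 / 2 + 2 * cosh (Wof ω Γ ω' / 2) / 2 * exp (-Z) := by
        refine (abs_add_three _ _ _).trans (add_le_add (add_le_add ?_ ?_) ?_)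
        · rw [abs_mul]; gcongr
        · exact abs_treeSlope_le ω ω'
        · rw [abs_mul, abs_div, abs_two, abs_of_pos hZ]; gcongr
    _ ≤ _ := by nlinarith

theorem abs_d2Hmid_le (hσ : ω.2.2.1 ≠ ω'.2.2.1) {γ : ℝ} (hγ : |γ| ≤ 1) :
    |d2Hmid a ω Z (Γ + γ) ω'| ≤ |(3 * a + 1) / 2| + 1 + HexpII ω Z Γ ω' := by
  have hZ := exp_pos (-Z)
  have hlog : |logTiltDeriv2 ω.1 ω'.1 (exp Z) (Wof ω Γ ω' + γ)
      + logTiltDeriv2 ω.2.1 ω'.2.1 (exp Z) (Wof ω Γ ω' + γ)| ≤ 1 := by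
    have h := abs_logTiltDeriv2_le ω.1 ω'.1 (exp_pos Z).le (Wof ω Γ ω' + γ)
    have h' := abs_logTiltDeriv2_le ω.2.1 ω'.2.1 (exp_pos Z).le (Wof ω Γ ω' + γ)
    exact (abs_add_le _ _).trans (by linarith)
  have hcosh := cosh_half_add_le (Wof ω Γ ω') hγ
  rw [d2Hmid, Wof_add, HexpII_eq_of_ne Z Γ hσ]
  calc _ ≤ |(3 * a + 1) / 2| * 1 + 2 * cosh (Wof ω Γ ω' / 2) / 4 * exp (-Z) := by
        refine (abs_add_le _ _).trans (add_le_add ?_ ?_)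
        · rw [abs_mul]; gcongr
        · rw [abs_of_pos (by positivity)]; gcongr
    _ ≤ _ := by nlinarith [cosh_pos (Wof ω Γ ω' / 2)]

end Configuration

end

end MiddleHamiltonian

open MiddleHamiltonian in
theorem middle_hamiltonian_deformation_derivative_bound_general (a : ℝ) :
    ∃ c₈ : ℝ, 0 < c₈ ∧
      ∀ ω ω' : CycleConfig, ¬(ω.2.2.2 = lA ∧ ω'.2.2.2 = lB) → ∀ Z Γ : ℝ,
        ∀ γ ∈ Set.Icc (-1 : ℝ) 1,
          DifferentiableAt ℝ
            (fun γ' : ℝ => Hmid a 0 ω Z (Γ + γ' * indR (ω.2.2.1 ≠ ω'.2.2.1)) ω') γ ∧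
          DifferentiableAt ℝ
            (deriv (fun γ' : ℝ => Hmid a 0 ω Z (Γ + γ' * indR (ω.2.2.1 ≠ ω'.2.2.1)) ω')) γ ∧
          |deriv (fun γ' : ℝ => Hmid a 0 ω Z (Γ + γ' * indR (ω.2.2.1 ≠ ω'.2.2.1)) ω') γ| ≤
            c₈ + HexpII ω Z Γ ω' ∧
          |deriv (deriv
              (fun γ' : ℝ => Hmid a 0 ω Z (Γ + γ' * indR (ω.2.2.1 ≠ ω'.2.2.1)) ω')) γ| ≤
            c₈ + HexpII ω Z Γ ω' := by
  refine ⟨|(3 * a + 1) / 2| + 1, by positivity, fun ω ω' _ Z Γ γ hγ => ?_⟩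
  have hγ : |γ| ≤ 1 := abs_le.mpr hγ
  have hbound : 0 ≤ |(3 * a + 1) / 2| + 1 + HexpII ω Z Γ ω' := by
    have := HexpII_nonneg ω Z Γ ω'; positivity
  by_cases hσ : ω.2.2.1 = ω'.2.2.1
  · simp [indR, hσ, hbound]
  have hind : indR (ω.2.2.1 ≠ ω'.2.2.1) = 1 := if_pos hσ
  simp only [hind, mul_one]
  have h1 (x : ℝ) := (hasDerivAt_Hmid a 0 ω Z (Γ + x) ω').comp_const_add Γ x
  have h2 (x : ℝ) := (hasDerivAt_dHmid a 0 ω Z (Γ + x) ω').comp_const_add Γ x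
  have hderiv : deriv (fun γ' => Hmid a 0 ω Z (Γ + γ') ω') = fun x => dHmid a 0 ω Z (Γ + x) ω' :=
    funext fun x => (h1 x).deriv
  rw [hderiv, (h2 γ).deriv]
  exact ⟨(h1 γ).differentiableAt, (h2 γ).differentiableAt,
    abs_dHmid_le a Z Γ hσ hγ, abs_d2Hmid_le a Z Γ hσ hγ⟩

/-- Lemma 3.3: for `a > 0` there is a constant `c₈(a) > 0` such that the map
`γ ↦ H_middle,a,0(ω | Z, Γ + γ·1_{σ≠σ'} | ω')` is twice differentiable on `[−1,1]`
with first and second derivatives bounded by `c₈ + H_expII(ω|Z,Γ|ω')`. -/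
theorem middle_hamiltonian_deformation_derivative_bound (a : ℝ) (ha : 0 < a) :
    ∃ c₈ : ℝ, 0 < c₈ ∧
      ∀ ω ω' : CycleConfig, ¬(ω.2.2.2 = lA ∧ ω'.2.2.2 = lB) → ∀ Z Γ : ℝ,
        ∀ γ ∈ Set.Icc (-1 : ℝ) 1,
          DifferentiableAt ℝ
            (fun γ' : ℝ => Hmid a 0 ω Z (Γ + γ' * indR (ω.2.2.1 ≠ ω'.2.2.1)) ω') γ ∧
          DifferentiableAt ℝ
            (deriv (fun γ' : ℝ => Hmid a 0 ω Z (Γ + γ' * indR (ω.2.2.1 ≠ ω'.2.2.1)) ω')) γ ∧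
          |deriv (fun γ' : ℝ => Hmid a 0 ω Z (Γ + γ' * indR (ω.2.2.1 ≠ ω'.2.2.1)) ω') γ| ≤
            c₈ + HexpII ω Z Γ ω' ∧
          |deriv (deriv
              (fun γ' : ℝ => Hmid a 0 ω Z (Γ + γ' * indR (ω.2.2.1 ≠ ω'.2.2.1)) ω')) γ| ≤
            c₈ + HexpII ω Z Γ ω' :=
  middle_hamiltonian_deformation_derivative_bound_general a
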